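/- Fix b > 0, M > 0 and ε₀ > 0. Let ρ : ℝ³ → ℝ be nonnegative, integrable with ∫_{ℝ³} ρ = M, and ellipsoidally symmetric, i.e. ρ(x) = ρ(r_b(x)) a.e. If x̄ ∈ ℝ³ satisfies ∫_{|x−x̄|<1} ρ(x) dx ≥ ε₀, then |x̄| ≤ (4πM/ε₀ + 1)(2b + b⁻¹ + 1). In particular there is a constant r₀ = r₀(b, M, ε₀) such that every such concentration point x̄ satisfies |x̄| + 1 ≤ r₀. -/

import Mathlib

open MeasureTheory Real Set Filter

noncomputable section

/-- Three-dimensional Euclidean space. -/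
abbrev E3 : Type := EuclideanSpace ℝ (Fin 3)

/-- Cylindrical radius `η(x) = √(x₁² + x₂²)`. -/
def eta (x : E3) : ℝ := Real.sqrt ((x 0) ^ 2 + (x 1) ^ 2)

/-- Ellipsoidal radius `r_b(x) = √(η(x)² + x₃²/b²)`. -/
def rb (b : ℝ) (x : E3) : ℝ := Real.sqrt ((eta x) ^ 2 + (x 2) ^ 2 / b ^ 2)

/-- Newtonian potential `Bρ(x) = ∫ |x-y|⁻¹ ρ(y) dy`. -/
def Bpot (ρ : E3 → ℝ) (x : E3) : ℝ := ∫ y : E3, ρ y / ‖x - y‖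

/-- Cylindrical mass `m_ρ(s) = ∫_{η(y) < s} ρ(y) dy`. -/
def mMass (ρ : E3 → ℝ) (s : ℝ) : ℝ := ∫ y in {y : E3 | eta y < s}, ρ y

/-- Ellipsoidal mass `n_{b,ρ}(s) = ∫_{r_b(y) ≤ s} ρ(y) dy`. -/
def nMass (b : ℝ) (ρ : E3 → ℝ) (s : ℝ) : ℝ := ∫ y in {y : E3 | rb b y ≤ s}, ρ y

/-- `A(s) = s ∫₀ˢ f(t) t⁻² dt`. -/
def Afun (f : ℝ → ℝ) (s : ℝ) : ℝ := s * ∫ t in (0:ℝ)..s, f t / t ^ 2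

/-- `T = e^S`. -/
def Tfun (S : ℝ → ℝ) (n : ℝ) : ℝ := Real.exp (S n)

/-- The energy functional `E_b(ρ)`. -/
def Eb (b : ℝ) (f S L : ℝ → ℝ) (ρ : E3 → ℝ) : ℝ :=
  (∫ x : E3, Afun f (ρ x) * Tfun S (nMass b ρ (rb b x)))
    + (1 / 2) * (∫ x : E3, ρ x * L (mMass ρ (eta x)) / (eta x) ^ 2)
    - (1 / 2) * (∫ x : E3, ρ x * Bpot ρ x)

/-- The three integrals entering `E_b(ρ)` are finite. -/
def EbFinite (b : ℝ) (f S L : ℝ → ℝ) (ρ : E3 → ℝ) : Prop :=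
  Integrable (fun x : E3 => Afun f (ρ x) * Tfun S (nMass b ρ (rb b x))) ∧
  Integrable (fun x : E3 => ρ x * L (mMass ρ (eta x)) / (eta x) ^ 2) ∧
  Integrable (fun x : E3 => ρ x * Bpot ρ x)

/-- Ellipsoidal symmetry: `ρ(x) = ρ(r_b(x))`, i.e. `ρ` is a.e. a function of `r_b`. -/
def EllipSym (b : ℝ) (ρ : E3 → ℝ) : Prop := ∃ g : ℝ → ℝ, ∀ᵐ x : E3, ρ x = g (rb b x)

/-- The admissible set `W^b`. -/
def MemWb (b M : ℝ) (f S L : ℝ → ℝ) (ρ : E3 → ℝ) : Prop :=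
  (∀ᵐ x : E3, 0 ≤ ρ x) ∧ Integrable ρ ∧ (∫ x : E3, ρ x) = M ∧ EllipSym b ρ ∧
    EbFinite b f S L ρ

/-- `ρ` minimizes `E_b` over `W^b`. -/
def MinimizesWb (b M : ℝ) (f S L : ℝ → ℝ) (ρ : E3 → ℝ) : Prop :=
  MemWb b M f S L ρ ∧ ∀ σ, MemWb b M f S L σ → Eb b f S L ρ ≤ Eb b f S L σ

/-- The truncated admissible set `W^b_R`. -/
def MemWbR (b M R : ℝ) (ρ : E3 → ℝ) : Prop :=
  (∀ᵐ x : E3, 0 ≤ ρ x) ∧ Integrable ρ ∧ (∫ x : E3, ρ x) = M ∧ EllipSym b ρ ∧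
    (∀ x : E3, R ≤ ‖x‖ → ρ x = 0) ∧ (∀ᵐ x : E3, ρ x ≤ R)

/-- `ρ` minimizes `E_b` over `W^b_R`. -/
def MinimizesWbR (b M : ℝ) (f S L : ℝ → ℝ) (R : ℝ) (ρ : E3 → ℝ) : Prop :=
  MemWbR b M R ρ ∧ ∀ σ, MemWbR b M R σ → Eb b f S L ρ ≤ Eb b f S L σ

/-- The potential function `E'_b(ρ)`. -/
def Ebprime (b : ℝ) (f S L : ℝ → ℝ) (ρ : E3 → ℝ) (x : E3) : ℝ :=
  deriv (Afun f) (ρ x) * Tfun S (nMass b ρ (rb b x))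
    + (∫ y in {y : E3 | rb b x < rb b y}, Afun f (ρ y) * deriv (Tfun S) (nMass b ρ (rb b y)))
    + (∫ s in Ioi (eta x), L (mMass ρ s) / s ^ 3)
    - Bpot ρ x

/-- Condition (A1). -/
def CondA1 (f : ℝ → ℝ) : Prop :=
  (∀ s > (0:ℝ), 0 ≤ f s) ∧ ContDiffOn ℝ 1 f (Ioi 0) ∧ StrictMonoOn f (Ioi 0) ∧
  Tendsto (fun s : ℝ => f s / s ^ ((4:ℝ)/3)) (nhdsWithin 0 (Ioi 0)) (nhds 0) ∧
  Tendsto (fun s : ℝ => f s / s ^ ((4:ℝ)/3)) atTop atTop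

/-- Condition (A2). -/
def CondA2 (f : ℝ → ℝ) (γ : ℝ) : Prop :=
  1 < γ ∧ Tendsto (fun s : ℝ => f s / s ^ γ) atTop (nhds 0)

/-- Condition (A3): `L` nonnegative, absolutely continuous on `[0,M]`, `L(0)=0`. -/
def CondA3 (M : ℝ) (L : ℝ → ℝ) : Prop :=
  (∀ m ∈ Icc (0:ℝ) M, 0 ≤ L m) ∧ L 0 = 0 ∧
  ∃ L' : ℝ → ℝ, IntegrableOn L' (Icc 0 M) ∧ ∀ m ∈ Icc (0:ℝ) M, L m = ∫ t in (0:ℝ)..m, L' t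

/-- Condition (A4). -/
def CondA4 (M : ℝ) (L : ℝ → ℝ) : Prop :=
  (∀ a ∈ Icc (0:ℝ) 1, ∀ m ∈ Icc (0:ℝ) M, a ^ ((4:ℝ)/3) * L m ≤ L (a * m)) ∧
  MonotoneOn L (Icc 0 M)

/-- Condition (A5). -/
def CondA5 (M : ℝ) (S : ℝ → ℝ) : Prop := ContDiffOn ℝ 1 S (Icc 0 M) ∧ S 0 = 0

/-- Condition (A6). -/
def CondA6 (M : ℝ) (S : ℝ → ℝ) : Prop :=
  ∀ a ∈ Icc (0:ℝ) 1, ∀ n ∈ Icc (0:ℝ) M,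
    a ^ ((2:ℝ)/3) * Real.exp (S n) ≤ Real.exp (S (a * n)) ∧
    a ^ ((2:ℝ)/3) * Real.exp (S n) ≤ Real.exp (S (M - a * M + a * n))

/-- Condition (A7): the entropy is non-increasing near the total mass `M`. -/
def CondA7 (M : ℝ) (S : ℝ → ℝ) : Prop :=
  ∃ δ₀ > (0:ℝ), AntitoneOn S (Icc (M - δ₀) M)

/-- Unit radial vector in cylindrical coordinates. -/
def iEta (x : E3) : E3 := (eta x)⁻¹ • (WithLp.equiv 2 (Fin 3 → ℝ)).symm ![x 0, x 1, 0]

/-!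
With `D = diag(1, 1, b⁻¹)` we have `r_b(x) = ‖D x‖`, so for every `c` with `r_b(c) = r_b(x̄)` the
conjugate `D⁻¹ R D` of a reflection `R` is a volume-preserving map that preserves `r_b` (hence
`ρ`), sends `x̄` to `c`, and maps the unit ball into the ball of radius
`‖D‖ ‖D⁻¹‖ ≤ b + b⁻¹` about `c`. Each such ball therefore carries mass at least `ε₀`. The
ellipsoid `{r_b = r_b(x̄)}` has longer semi-axis `max(1, b) r_b(x̄) ≥ ‖x̄‖`, so it contains a curve
`γ : [0, ‖x̄‖] → ℝ³` with `dist (γ s) (γ t) ≥ |s - t|`, and hence about `‖x̄‖ / (2 (b + b⁻¹))`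
disjoint such balls, whose total mass is at most `M`.
-/

open Metric

section Packing

variable {X : Type*} [PseudoMetricSpace X] [MeasurableSpace X] [OpensMeasurableSpace X]
  {μ : Measure X} {ρ : X → ℝ}

theorem card_mul_le_integral_of_separated_balls {ι : Type*} (hnn : 0 ≤ᵐ[μ] ρ)
    (hint : Integrable ρ μ) {s : Finset ι} {c : ι → X} {κ ε : ℝ}
    (hsep : (s : Set ι).Pairwise fun i j => 2 * κ ≤ dist (c i) (c j))
    (hball : ∀ i ∈ s, ε ≤ ∫ x in ball (c i) κ, ρ x ∂μ) :
    s.card * ε ≤ ∫ x, ρ x ∂μ := by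
  have hdisj : (s : Set ι).Pairwise (Function.onFun Disjoint fun i => ball (c i) κ) :=
    fun i hi j hj hij => ball_disjoint_ball (by linarith [hsep hi hj hij])
  calc s.card * ε = ∑ _i ∈ s, ε := by simp
    _ ≤ ∑ i ∈ s, ∫ x in ball (c i) κ, ρ x ∂μ := Finset.sum_le_sum hball
    _ = ∫ x in ⋃ i ∈ s, ball (c i) κ, ρ x ∂μ :=
      (integral_biUnion_finset s (fun _ _ => measurableSet_ball) hdisj
        fun _ _ => hint.integrableOn).symm
    _ ≤ ∫ x, ρ x ∂μ := setIntegral_le_integral hint hnn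

/-- The centres `γ (2κk)`, `0 ≤ k ≤ L / (2κ)`, are `2κ`-separated. -/
theorem mul_le_integral_of_balls_along_curve (hnn : 0 ≤ᵐ[μ] ρ) (hint : Integrable ρ μ)
    {γ : ℝ → X} {L κ ε : ℝ} (hL : 0 ≤ L) (hκ : 0 < κ) (hε : 0 ≤ ε)
    (hγ : ∀ s t, |s - t| ≤ dist (γ s) (γ t))
    (hball : ∀ t ∈ Icc 0 L, ε ≤ ∫ x in ball (γ t) κ, ρ x ∂μ) :
    L * ε ≤ 2 * κ * ∫ x, ρ x ∂μ := by
  set n := ⌊L / (2 * κ)⌋₊ + 1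
  have hmem : ∀ k ∈ Finset.range n, 2 * κ * k ∈ Icc 0 L := by
    intro k hk
    have hk : (k : ℝ) ≤ L / (2 * κ) :=
      (Nat.cast_le.mpr (Nat.lt_succ_iff.mp (Finset.mem_range.mp hk))).trans
        (Nat.floor_le (by positivity))
    exact ⟨by positivity, by rwa [le_div_iff₀' (by positivity)] at hk⟩
  have hsep : (Finset.range n : Set ℕ).Pairwise
      fun j k => 2 * κ ≤ dist (γ (2 * κ * j)) (γ (2 * κ * k)) := by
    intro j _ k _ hjk
    have hjk : (1 : ℝ) ≤ |(j : ℝ) - k| := by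
      have : (1 : ℤ) ≤ |(j : ℤ) - k| := Int.one_le_abs (sub_ne_zero.mpr (by exact_mod_cast hjk))
      exact_mod_cast this
    calc 2 * κ ≤ 2 * κ * |(j : ℝ) - k| := le_mul_of_one_le_right (by positivity) hjk
      _ = |2 * κ * j - 2 * κ * k| := by
        rw [← mul_sub, abs_mul, abs_of_pos (by positivity : 0 < 2 * κ)]
      _ ≤ _ := hγ _ _
  have hcount := card_mul_le_integral_of_separated_balls hnn hint hsep
    fun k hk => hball _ (hmem k hk)
  rw [Finset.card_range] at hcount
  have hn : L / (2 * κ) < n := by simpa [n] using Nat.lt_floor_add_one (L / (2 * κ))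
  calc L * ε = 2 * κ * (L / (2 * κ) * ε) := by field_simp
    _ ≤ 2 * κ * (n * ε) := by gcongr
    _ ≤ 2 * κ * ∫ x, ρ x ∂μ := by gcongr

end Packing

theorem setIntegral_le_of_image_subset {X : Type*} [MeasurableSpace X] {μ : Measure X}
    {ρ : X → ℝ} (hnn : 0 ≤ᵐ[μ] ρ) (hint : Integrable ρ μ) {T : X → X}
    (hT : MeasurePreserving T μ μ) (hTe : MeasurableEmbedding T) (hρT : ρ ∘ T =ᵐ[μ] ρ)
    {s t : Set X} (hst : T '' s ⊆ t) :
    ∫ x in s, ρ x ∂μ ≤ ∫ x in t, ρ x ∂μ :=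
  calc ∫ x in s, ρ x ∂μ = ∫ x in s, ρ (T x) ∂μ := integral_congr_ae (ae_restrict_of_ae hρT.symm)
    _ = ∫ x in T '' s, ρ x ∂μ := (hT.setIntegral_image_emb hTe ρ s).symm
    _ ≤ ∫ x in t, ρ x ∂μ :=
      setIntegral_mono_set hint.integrableOn (ae_restrict_of_ae hnn) hst.eventuallyLE

section ConjReflection

variable {E : Type*} [NormedAddCommGroup E] [InnerProductSpace ℝ E] [FiniteDimensional ℝ E]
  [MeasurableSpace E] [BorelSpace E] (μ : Measure E) [μ.IsAddHaarMeasure]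

/-- `T = D⁻¹ ∘ R ∘ D` with `R` the reflection exchanging `D x` and `D c`; it preserves the Haar
measure because `det T = det R = ±1`. -/
theorem exists_conj_reflection_apply_eq (D : E ≃L[ℝ] E) {x c : E} (h : ‖D x‖ = ‖D c‖) :
    ∃ T : E ≃L[ℝ] E, T x = c ∧ (∀ y, ‖D (T y)‖ = ‖D y‖) ∧
      ‖(T : E →L[ℝ] E)‖ ≤ ‖(D : E →L[ℝ] E)‖ * ‖(D.symm : E →L[ℝ] E)‖ ∧
      MeasurePreserving T μ μ := by
  set R := (ℝ ∙ (D x - D c))ᗮ.reflection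
  set T : E ≃L[ℝ] E := D.trans (R.toContinuousLinearEquiv.trans D.symm)
  have hT : ∀ y, T y = D.symm (R (D y)) := fun _ => rfl
  refine ⟨T, ?_, fun y => ?_, ?_, ?_⟩
  · rw [hT, Submodule.reflection_sub h, D.symm_apply_apply]
  · rw [hT, D.apply_symm_apply, R.norm_map]
  · refine ContinuousLinearMap.opNorm_le_bound _ (by positivity) fun y => ?_
    calc ‖T y‖ ≤ ‖(D.symm : E →L[ℝ] E)‖ * ‖R (D y)‖ := (D.symm : E →L[ℝ] E).le_opNorm _
      _ = ‖(D.symm : E →L[ℝ] E)‖ * ‖D y‖ := by rw [R.norm_map]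
      _ ≤ ‖(D.symm : E →L[ℝ] E)‖ * (‖(D : E →L[ℝ] E)‖ * ‖y‖) :=
        mul_le_mul_of_nonneg_left ((D : E →L[ℝ] E).le_opNorm y) (norm_nonneg _)
      _ = _ := by ring
  · have hdet : LinearMap.det ((T : E →L[ℝ] E) : E →ₗ[ℝ] E)
        = (-1) ^ Module.finrank ℝ (ℝ ∙ (D x - D c))ᗮᗮ := by
      rw [← Submodule.det_reflection]
      exact LinearMap.det_conj (R : E →ₗ[ℝ] E) D.symm.toLinearEquiv
    refine ⟨T.continuous.measurable, ?_⟩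
    rw [← ContinuousLinearEquiv.coe_coe, ← ContinuousLinearMap.coe_coe,
      Measure.map_linearMap_addHaar_eq_smul_addHaar μ (by rw [hdet]; simp), hdet]
    simp

theorem setIntegral_ball_le_of_ae_eq_comp_norm [Nontrivial E] (D : E ≃L[ℝ] E) {ρ : E → ℝ}
    {g : ℝ → ℝ} (hρ : ∀ᵐ y ∂μ, ρ y = g ‖D y‖) (hnn : 0 ≤ᵐ[μ] ρ) (hint : Integrable ρ μ)
    {x c : E} (h : ‖D x‖ = ‖D c‖) (r : ℝ) :
    ∫ y in ball x r, ρ y ∂μ ≤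
      ∫ y in ball c (‖(D : E →L[ℝ] E)‖ * ‖(D.symm : E →L[ℝ] E)‖ * r), ρ y ∂μ := by
  obtain ⟨T, hTx, hTD, hTnorm, hT⟩ := exists_conj_reflection_apply_eq μ D h
  have hρT : ρ ∘ T =ᵐ[μ] ρ := by
    filter_upwards [hT.quasiMeasurePreserving.ae_eq_comp hρ, hρ] with y hTy hy
    rw [Function.comp_apply, Function.comp_apply] at hTy
    rw [Function.comp_apply, hTy, hy, hTD]
  refine setIntegral_le_of_image_subset hnn hint hT
    T.toHomeomorph.measurableEmbedding hρT ?_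
  rintro _ ⟨y, hy, rfl⟩
  rw [mem_ball, dist_eq_norm, ← hTx, ← map_sub]
  calc ‖T (y - x)‖ ≤ ‖(T : E →L[ℝ] E)‖ * ‖y - x‖ := (T : E →L[ℝ] E).le_opNorm _
    _ ≤ ‖(D : E →L[ℝ] E)‖ * ‖(D.symm : E →L[ℝ] E)‖ * ‖y - x‖ := by gcongr
    _ < _ := by
      rw [mem_ball, dist_eq_norm] at hy
      exact mul_lt_mul_of_pos_left hy (zero_lt_one.trans_le D.one_le_norm_mul_norm_symm)

end ConjReflection

def stretchZ (t : ℝ) : E3 →L[ℝ] E3 :=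
  LinearMap.toContinuousLinearMap
    { toFun := fun x => !₂[x 0, x 1, t * x 2]
      map_add' := fun x y => by ext i; fin_cases i <;> simp [mul_add]
      map_smul' := fun c x => by ext i; fin_cases i <;> simp [mul_left_comm] }

@[simp]
theorem stretchZ_apply (t : ℝ) (x : E3) : stretchZ t x = !₂[x 0, x 1, t * x 2] := rfl

theorem stretchZ_stretchZ (s t : ℝ) (x : E3) : stretchZ s (stretchZ t x) = stretchZ (s * t) x := by
  ext i; fin_cases i <;> simp [mul_assoc]

theorem stretchZ_one (x : E3) : stretchZ 1 x = x := by
  ext i; fin_cases i <;> simp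

theorem norm_stretchZ_le (t : ℝ) : ‖stretchZ t‖ ≤ max 1 |t| := by
  refine ContinuousLinearMap.opNorm_le_bound _ (by positivity) fun x => ?_
  have h1 : (1 : ℝ) ≤ max 1 |t| ^ 2 := by nlinarith [le_max_left 1 |t|]
  have ht : t ^ 2 ≤ max 1 |t| ^ 2 := by
    rw [← sq_abs]; exact pow_le_pow_left₀ (abs_nonneg t) (le_max_right _ _) 2
  refine le_of_sq_le_sq ?_ (by positivity)
  simp only [stretchZ_apply, EuclideanSpace.norm_sq_eq, norm_eq_abs, sq_abs, Fin.sum_univ_three,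
    Matrix.cons_val_zero, Matrix.cons_val_one, Matrix.cons_val, mul_pow]
  linarith [mul_le_mul_of_nonneg_right h1 (add_nonneg (sq_nonneg (x 0)) (sq_nonneg (x 1))),
    mul_le_mul_of_nonneg_right ht (sq_nonneg (x 2))]

def ellipScale (b : ℝ) (hb : b ≠ 0) : E3 ≃L[ℝ] E3 :=
  ContinuousLinearEquiv.equivOfInverse (stretchZ b⁻¹) (stretchZ b)
    (fun x => by rw [stretchZ_stretchZ, mul_inv_cancel₀ hb, stretchZ_one])
    (fun x => by rw [stretchZ_stretchZ, inv_mul_cancel₀ hb, stretchZ_one])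

theorem rb_sq (b : ℝ) (x : E3) : rb b x ^ 2 = x 0 ^ 2 + x 1 ^ 2 + x 2 ^ 2 / b ^ 2 := by
  rw [rb, eta, sq_sqrt (by positivity), sq_sqrt (by positivity)]

theorem rb_eq_norm_ellipScale {b : ℝ} (hb : b ≠ 0) (x : E3) : rb b x = ‖ellipScale b hb x‖ := by
  refine (sq_eq_sq₀ (by unfold rb; positivity) (norm_nonneg _)).mp ?_
  rw [rb_sq, EuclideanSpace.norm_sq_eq, Fin.sum_univ_three]
  simp [ellipScale, div_eq_mul_inv, mul_pow, mul_comm]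

theorem norm_le_max_one_mul_rb {b : ℝ} (hb : 0 < b) (x : E3) : ‖x‖ ≤ max 1 b * rb b x := by
  have hD := (ellipScale b hb.ne').symm_apply_apply x
  calc ‖x‖ = ‖stretchZ b (ellipScale b hb.ne' x)‖ := congrArg norm hD.symm
    _ ≤ max 1 |b| * ‖ellipScale b hb.ne' x‖ :=
      (stretchZ b).le_of_opNorm_le (norm_stretchZ_le b) _
    _ = max 1 b * rb b x := by rw [abs_of_pos hb, rb_eq_norm_ellipScale]

theorem exists_curve_rb_eq {b : ℝ} (hb : 0 < b) (x : E3) :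
    ∃ γ : ℝ → E3, (∀ t ∈ Icc 0 ‖x‖, rb b (γ t) = rb b x) ∧
      ∀ s t, |s - t| ≤ dist (γ s) (γ t) := by
  set r := rb b x
  have hr : 0 ≤ r := by unfold r rb; positivity
  have hx := norm_le_max_one_mul_rb hb x
  have rb_eq {y : E3} (hy : y 0 ^ 2 + y 1 ^ 2 + y 2 ^ 2 / b ^ 2 = r ^ 2) : rb b y = r :=
    (sq_eq_sq₀ (by unfold rb; positivity) hr).mp (by rw [rb_sq, hy])
  -- the curve runs along the longer axis of the ellipsoid: the `x₃`-axis if `1 ≤ b`, else `x₁`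
  rcases le_total 1 b with hb1 | hb1
  · let γ (t : ℝ) : E3 := !₂[√(r ^ 2 - (t / b) ^ 2), 0, t]
    refine ⟨γ, fun t ht => rb_eq ?_, fun s t => ?_⟩
    · have : t / b ≤ r := by
        rw [div_le_iff₀ hb]; linarith [ht.2, max_eq_right hb1 ▸ hx, mul_comm b r]
      have : (t / b) ^ 2 ≤ r ^ 2 := pow_le_pow_left₀ (div_nonneg ht.1 hb.le) this 2
      simp only [γ, Matrix.cons_val_zero, Matrix.cons_val_one, Matrix.cons_val,
        sq_sqrt (sub_nonneg.mpr this)]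
      ring
    · simpa [γ, Real.dist_eq] using PiLp.dist_apply_le (γ s) (γ t) 2
  · let γ (t : ℝ) : E3 := !₂[t, √(r ^ 2 - t ^ 2), 0]
    refine ⟨γ, fun t ht => rb_eq ?_, fun s t => ?_⟩
    · have : t ^ 2 ≤ r ^ 2 :=
        pow_le_pow_left₀ ht.1 (by linarith [ht.2, max_eq_left hb1 ▸ hx]) 2
      simp [γ, sq_sqrt (sub_nonneg.mpr this)]
    · simpa [γ, Real.dist_eq] using PiLp.dist_apply_le (γ s) (γ t) 0

theorem norm_ellipScale_mul_norm_symm_le {b : ℝ} (hb : 0 < b) :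
    ‖(ellipScale b hb.ne' : E3 →L[ℝ] E3)‖ * ‖((ellipScale b hb.ne').symm : E3 →L[ℝ] E3)‖
      ≤ b + b⁻¹ := by
  have h := mul_le_mul (norm_stretchZ_le b⁻¹) (norm_stretchZ_le b) (norm_nonneg _)
    (by positivity)
  rw [abs_of_pos hb, abs_of_pos (inv_pos.mpr hb)] at h
  refine h.trans ?_
  rcases le_total 1 b with hb1 | hb1
  · rw [max_eq_left (inv_le_one_of_one_le₀ hb1), max_eq_right hb1]; linarith [inv_pos.mpr hb]
  · rw [max_eq_right (one_le_inv₀ hb |>.mpr hb1), max_eq_left hb1]; linarith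

/-- Lemma 11: any unit-ball concentration point of an ellipsoidally symmetric density
of total mass `M` lies within a fixed distance from the origin. -/
theorem statement16 (b M ε₀ : ℝ) (hb : 0 < b) (hM : 0 < M) (hε : 0 < ε₀)
    (ρ : E3 → ℝ) (hnn : ∀ᵐ x : E3, 0 ≤ ρ x) (hint : Integrable ρ)
    (hmass : (∫ x : E3, ρ x) = M) (hsym : EllipSym b ρ)
    (xbar : E3) (hconc : ε₀ ≤ ∫ x in Metric.ball xbar 1, ρ x) :
    ‖xbar‖ ≤ (4 * Real.pi * M / ε₀ + 1) * (2 * b + b⁻¹ + 1) ∧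
    ‖xbar‖ + 1 ≤ (4 * Real.pi * M / ε₀ + 1) * (2 * b + b⁻¹ + 1) + 1 := by
  obtain ⟨g, hg⟩ := hsym
  set D := ellipScale b hb.ne'
  set K := ‖(D : E3 →L[ℝ] E3)‖ * ‖(D.symm : E3 →L[ℝ] E3)‖
  have hρ : ∀ᵐ y : E3, ρ y = g ‖D y‖ := by simpa only [rb_eq_norm_ellipScale hb.ne'] using hg
  obtain ⟨γ, hγ_rb, hγ_sep⟩ := exists_curve_rb_eq hb xbar
  have hball (t : ℝ) (ht : t ∈ Icc 0 ‖xbar‖) : ε₀ ≤ ∫ y in ball (γ t) K, ρ y := by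
    have h : ‖D xbar‖ = ‖D (γ t)‖ := by
      rw [← rb_eq_norm_ellipScale, ← rb_eq_norm_ellipScale, hγ_rb t ht]
    simpa only [mul_one] using hconc.trans (setIntegral_ball_le_of_ae_eq_comp_norm volume D hρ hnn hint h 1)
  have key := mul_le_integral_of_balls_along_curve hnn hint (norm_nonneg xbar)
    (zero_lt_one.trans_le D.one_le_norm_mul_norm_symm) hε.le hγ_sep hball
  rw [hmass] at key
  have hx : ‖xbar‖ ≤ 2 * (b + b⁻¹) * (M / ε₀) := by
    rw [← mul_div_assoc, le_div_iff₀ hε]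
    exact key.trans (by gcongr; exact norm_ellipScale_mul_norm_symm_le hb)
  have hbound : ‖xbar‖ ≤ (4 * π * M / ε₀ + 1) * (2 * b + b⁻¹ + 1) := by
    refine hx.trans ?_
    have hq := div_pos hM hε
    have hb' := inv_pos.mpr hb
    rw [mul_div_assoc]
    nlinarith [pi_gt_three, mul_pos hq hb, mul_pos hq hb']
  exact ⟨hbound, by linarith⟩
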